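/- Let Fₙ denote the Fibonacci numbers (F₁ = F₂ = 1, F_{n+2} = F_{n+1} + Fₙ) and ωₙ = F_{n+2}²·F_{n+3}/(F_{n+1}²·Fₙ) ∈ ℝ. Then for every n ≥ 1, the rational number t = F_{n+3}/(2F_{n+1}) is a root of the Gauss characteristic equation t(2t − 1)² = (t − 1)ωₙ. -/

import Mathlib

/-- The Fibonacci numbers viewed as real numbers: `F 1 = F 2 = 1`,
`F (n+2) = F (n+1) + F n`. -/
noncomputable def fibR (n : ℕ) : ℝ := (Nat.fib n : ℝ)

/-
With `a = Fₙ`, `b = F_{n+1}`, `c = F_{n+2} = b + a` and `d = F_{n+3} = c + b`, the candidate root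
`t = d / (2b)` satisfies `2t - 1 = c / b` and `t - 1 = a / (2b)`. Both sides of the cubic then equal
`c² d / (2 b³)`: the factor `a` of `t - 1` cancels the `a` in the denominator of `ω`.
-/

section GaussCubic

variable {K : Type*} [Field K] [NeZero (2 : K)] {a b c d : K}

theorem two_mul_div_two_mul_sub_one (hb : b ≠ 0) (hd : d = c + b) :
    2 * (d / (2 * b)) - 1 = c / b := by
  subst hd
  field_simp
  ring

theorem div_two_mul_sub_one (hb : b ≠ 0) (hc : c = b + a) (hd : d = c + b) :
    d / (2 * b) - 1 = a / (2 * b) := by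
  subst hc hd
  field_simp
  ring

theorem gauss_cubic_of_add_eq (ha : a ≠ 0) (hb : b ≠ 0) (hc : c = b + a) (hd : d = c + b) :
    d / (2 * b) * (2 * (d / (2 * b)) - 1) ^ 2
      = (d / (2 * b) - 1) * (c ^ 2 * d / (b ^ 2 * a)) := by
  rw [two_mul_div_two_mul_sub_one hb hd, div_two_mul_sub_one hb hc hd]
  field_simp

end GaussCubic

theorem fibR_add_two (n : ℕ) : fibR (n + 2) = fibR (n + 1) + fibR n := by
  simp only [fibR, Nat.fib_add_two, Nat.cast_add]
  ring

theorem fibR_ne_zero {n : ℕ} (hn : n ≠ 0) : fibR n ≠ 0 := by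
  simpa [fibR] using hn

/-- For every `n ≥ 1`, the number `t = F_{n+3}/(2F_{n+1})` is a root of the
Gauss characteristic equation `t(2t − 1)² = (t − 1)ωₙ`, where
`ωₙ = F_{n+2}²·F_{n+3}/(F_{n+1}²·Fₙ)`. -/
theorem fibonacci_pentagram_rational_root (n : ℕ) (hn : 1 ≤ n)
    (ω t : ℝ)
    (hω : ω = fibR (n + 2) ^ 2 * fibR (n + 3) / (fibR (n + 1) ^ 2 * fibR n))
    (ht : t = fibR (n + 3) / (2 * fibR (n + 1))) :
    t * (2 * t - 1) ^ 2 = (t - 1) * ω := by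
  subst hω ht
  exact gauss_cubic_of_add_eq (fibR_ne_zero (by omega)) (fibR_ne_zero n.succ_ne_zero)
    (fibR_add_two n) (fibR_add_two (n + 1))
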